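/- Let f be a group strategy-proof local priority mechanism for a constraint C, and let A be the set of implementable local compromiser assignments that induce f. Then A is closed under pointwise unions: if α, α′ ∈ A, then the map x ↦ α(x) ∪ α′(x) is an implementable local compromiser assignment that induces f. -/

import Mathlib

/- Common framework: constrained allocation, local priority mechanisms
   (Root & Ahn, "Local Priority Mechanisms"). Agents `N`, objects `O`.
   A strict preference is encoded as a `LinearOrder` on `O`, where
   `pi.lt b a` means `a` is strictly preferred to `b`. -/

open Classical

noncomputable section

variable {N O : Type}

/-- `a` is strictly preferred to `b` under `pi`. -/
def sPref (pi : LinearOrder O) (a b : O) : Prop := pi.lt b a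

/-- `a` is weakly preferred to `b` under `pi`. -/
def wPref (pi : LinearOrder O) (a b : O) : Prop := a = b ∨ pi.lt b a

/-- The favourite (top-ranked) object under `pi`. -/
def topObj [Fintype O] [Nonempty O] (pi : LinearOrder O) : O :=
  @Finset.max' O pi Finset.univ Finset.univ_nonempty

/-- `tau1 p` is the allocation assigning each agent her favourite object. -/
def tau1 [Fintype O] [Nonempty O] (p : N → LinearOrder O) : N → O :=
  fun i => topObj (p i)

/-- The strict lower contour set of `a` under `pi`, as a finset. -/
def LCfin [Fintype O] (pi : LinearOrder O) (a : O) : Finset O :=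
  Finset.univ.filter fun b => pi.lt b a

/-- The best element of the strict lower contour set of `a` (junk value `a` if empty). -/
def bestLC [Fintype O] (pi : LinearOrder O) (a : O) : O :=
  if h : (LCfin pi a).Nonempty then @Finset.max' O pi _ h else a

/-- At `x`, no local compromiser has an empty strict lower contour set. -/
def lpNoFail [Fintype O] (α : (N → O) → Set N) (p : N → LinearOrder O) (x : N → O) : Prop :=
  ∀ i ∈ α x, (LCfin (p i) (x i)).Nonempty

/-- One step of the local priority algorithm: all local compromisers move to their
next-favourite object, everyone else stays put. -/
def lpStep [Fintype O] (α : (N → O) → Set N) (p : N → LinearOrder O) (x : N → O) : N → O :=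
  fun k => if k ∈ α x then bestLC (p k) (x k) else x k

/-- The local priority algorithm for `α` at profile `p` terminates (without failure)
returning the feasible allocation `y`. -/
def lpRunsTo [Fintype O] [Nonempty O] (C : Set (N → O)) (α : (N → O) → Set N)
    (p : N → LinearOrder O) (y : N → O) : Prop :=
  ∃ (m : ℕ) (x : ℕ → N → O),
    x 0 = tau1 p ∧
    (∀ t < m, x t ∉ C ∧ lpNoFail α p (x t) ∧ x (t + 1) = lpStep α p (x t)) ∧
    x m = y ∧ y ∈ C

/-- `α` is a local compromiser assignment for the constraint `C`. -/
def IsLCA (C : Set (N → O)) (α : (N → O) → Set N) : Prop :=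
  ∀ x, (x ∉ C → (α x).Nonempty) ∧ (x ∈ C → α x = ∅)

/-- `α` is implementable: the local priority algorithm returns a feasible
allocation (never the failure symbol) on every profile. -/
def lpImplementable [Fintype O] [Nonempty O] (C : Set (N → O)) (α : (N → O) → Set N) : Prop :=
  ∀ p : N → LinearOrder O, ∃ y, lpRunsTo C α p y

/-- `α` is an implementable local compromiser assignment for `C` inducing the mechanism `f`,
i.e. `f = LP_α`. -/
def lpInduces [Fintype O] [Nonempty O] (C : Set (N → O)) (α : (N → O) → Set N)
    (f : (N → LinearOrder O) → N → O) : Prop :=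
  IsLCA C α ∧ ∀ p, lpRunsTo C α p (f p)

/-- The local priority mechanism `LP_α` (well defined whenever `α` is implementable,
since the algorithm is deterministic). -/
def LPmech [Fintype O] [Nonempty O] (C : Set (N → O)) (α : (N → O) → Set N)
    (p : N → LinearOrder O) : N → O :=
  if h : ∃ y, lpRunsTo C α p y then h.choose else fun _ => Classical.arbitrary O

/-- Group strategy-proofness. -/
def GSP (f : (N → LinearOrder O) → N → O) : Prop :=
  ∀ (p p' : N → LinearOrder O) (M : Set N), M.Nonempty → (∀ j ∉ M, p' j = p j) →
    ¬ ((∀ j ∈ M, wPref (p j) (f p' j) (f p j)) ∧ ∃ k ∈ M, sPref (p k) (f p' k) (f p k))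

/-- (Individual) strategy-proofness. -/
def StratProof (f : (N → LinearOrder O) → N → O) : Prop :=
  ∀ (p p' : N → LinearOrder O) (i : N), (∀ j, j ≠ i → p' j = p j) →
    ¬ sPref (p i) (f p' i) (f p i)

/-- Nonbossiness. -/
def Nonbossy (f : (N → LinearOrder O) → N → O) : Prop :=
  ∀ (p p' : N → LinearOrder O) (i : N), (∀ j, j ≠ i → p' j = p j) →
    f p' i = f p i → f p' = f p

/-- Maskin monotonicity. -/
def MaskinMono (f : (N → LinearOrder O) → N → O) : Prop :=
  ∀ p p' : N → LinearOrder O,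
    (∀ (i : N) (b : O), (p i).lt b (f p i) → (p' i).lt b (f p i)) → f p' = f p

/-- Unanimity. -/
def Unanimity [Fintype O] [Nonempty O] (C : Set (N → O))
    (f : (N → LinearOrder O) → N → O) : Prop :=
  ∀ p, tau1 p ∈ C → f p = tau1 p

/-- The Fixed compromiser condition. -/
def FixedComp [Fintype O] [Nonempty O] (C : Set (N → O))
    (f : (N → LinearOrder O) → N → O) : Prop :=
  ∀ μ, μ ∉ C → ∃ i : N, ∀ p, tau1 p = μ → f p i ≠ μ i

/-- `pi'` is obtained from `pi` by moving `c` to the bottom of the ranking. -/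
def MoveBottom (pi pi' : LinearOrder O) (c : O) : Prop :=
  (∀ b, b ≠ c → pi'.lt c b) ∧ (∀ a b, a ≠ c → b ≠ c → (pi'.lt a b ↔ pi.lt a b))

/-- Compromiser invariance. -/
def CompInv [Fintype O] [Nonempty O] (C : Set (N → O))
    (f : (N → LinearOrder O) → N → O) : Prop :=
  ∀ μ, μ ∉ C → ∀ p p' : N → LinearOrder O, tau1 p = μ →
    (∀ i, (∀ q, tau1 q = μ → f q i ≠ μ i) → MoveBottom (p i) (p' i) (μ i)) →
    (∀ i, ¬ (∀ q, tau1 q = μ → f q i ≠ μ i) → p' i = p i) →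
    f p' = f p

/-- Pareto efficiency relative to the constraint `C`. -/
def ParetoEff (C : Set (N → O)) (f : (N → LinearOrder O) → N → O) : Prop :=
  ∀ p, ¬ ∃ ν ∈ C, (∀ i, wPref (p i) (ν i) (f p i)) ∧ ∃ k, sPref (p k) (ν k) (f p k)

/-- `diffSet x y = d(x,y)`, the set of agents on which `x` and `y` differ. -/
def diffSet (x y : N → O) : Set N := {i | x i ≠ y i}

/-- Forward consistency. -/
def ForwardCons (α : (N → O) → Set N) : Prop :=
  ∀ x y : N → O, diffSet x y ⊆ α x → α x \ diffSet x y ⊆ α y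

/-- The sequence of allocations `z 0, …, z m` is acyclic. -/
def AcyclicSeq (z : ℕ → N → O) (m : ℕ) : Prop :=
  ∀ (i : N) (r s t : ℕ), r < s → s < t → t ≤ m → z r i = z t i → z s i = z r i

/-- `x` and `y` are `i`-connected under `α`. -/
def IConn (α : (N → O) → Set N) (i : N) (x y : N → O) : Prop :=
  ∃ m : ℕ, 1 ≤ m ∧ ∃ z : ℕ → N → O,
    z 0 = x ∧ z m = y ∧ AcyclicSeq z m ∧ diffSet (z 0) (z 1) = {i} ∧
    ∀ l < m, diffSet (z l) (z (l + 1)) ⊆ α (z l)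

/-- Backward consistency. -/
def BackCons (C : Set (N → O)) (α : (N → O) → Set N) : Prop :=
  ∀ (i : N) (x y : N → O), x ∉ C → y ∉ C → IConn α i x y →
    ∀ x' : N → O, diffSet x x' ⊆ α y → i ∉ diffSet x x' → i ∈ α x'

/-- The pointwise union of all implementable local compromiser assignments inducing `f`. -/
def alphaUnionAll [Fintype O] [Nonempty O] (C : Set (N → O))
    (f : (N → LinearOrder O) → N → O) : (N → O) → Set N :=
  fun x => {i | ∃ β, lpInduces C β f ∧ i ∈ β x}

end

/-
A group strategy-proof mechanism is strategy-proof and nonbossy, hence Maskin monotone. So if every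
agent weakly prefers her object in `x` to her object under `f p`, then `f p = f q` for the profile `q`
obtained from `p` by raising each `x i` to the top, where `τ₁(q) = x`. Running the algorithm of `α` (or
of `α'`) from `x = τ₁(q)`, a compromiser at `x` moves strictly down and never back up, so she does not
get `x i` in `f q = f p`; and if `x` is feasible, then `f p = f q = x`. Hence the algorithm of the union,
started at `τ₁(p)`, stays weakly above `f p`, never fails, strictly decreases the total size of the
lower contour sets at every step, and can stop only at `f p`.
-/

noncomputable section

variable {N O : Type}

section Preference

variable [Fintype O] {pi : LinearOrder O} {a b : O}

@[simp]
theorem mem_LCfin : b ∈ LCfin pi a ↔ pi.lt b a := by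
  simp [LCfin]

theorem LCfin_subset (hba : pi.le b a) : LCfin pi b ⊆ LCfin pi a := by
  let _ := pi
  intro c hc
  exact mem_LCfin.2 (lt_of_lt_of_le (mem_LCfin.1 hc) hba)

theorem LCfin_ssubset (hba : pi.lt b a) : LCfin pi b ⊂ LCfin pi a := by
  let _ := pi
  refine (Finset.ssubset_iff_of_subset (LCfin_subset hba.le)).2 ⟨b, mem_LCfin.2 hba, ?_⟩
  exact fun hb => lt_irrefl b (mem_LCfin.1 hb)

theorem bestLC_lt (h : (LCfin pi a).Nonempty) : pi.lt (bestLC pi a) a := by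
  rw [bestLC, dif_pos h]
  exact mem_LCfin.1 (Finset.max'_mem _ h)

theorem le_bestLC (hba : pi.lt b a) : pi.le b (bestLC pi a) := by
  have h : (LCfin pi a).Nonempty := ⟨b, mem_LCfin.2 hba⟩
  rw [bestLC, dif_pos h]
  exact Finset.le_max' _ _ (mem_LCfin.2 hba)

theorem le_topObj [Nonempty O] (pi : LinearOrder O) (b : O) : pi.le b (topObj pi) :=
  Finset.le_max' _ _ (Finset.mem_univ b)

end Preference

section RaiseToTop

abbrev raiseToTop (pi : LinearOrder O) (a : O) : LinearOrder O :=
  letI := pi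
  LinearOrder.lift' (fun b => toLex (decide (b = a), b))
    fun _ _ h => congrArg (fun z => (ofLex z).2) h

variable {pi : LinearOrder O} {a b c : O}

theorem raiseToTop_lt_of_ne (hba : b ≠ a) : (raiseToTop pi a).lt b a := by
  let _ := pi
  show toLex (decide (b = a), b) < toLex (decide (a = a), a)
  simp [Prod.Lex.toLex_lt_toLex, hba]

theorem raiseToTop_lt_of_lt (hbc : pi.lt b c) (hca : pi.le c a) : (raiseToTop pi a).lt b c := by
  let _ := pi
  rcases eq_or_ne c a with rfl | hc
  · exact raiseToTop_lt_of_ne hbc.ne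
  · have hb : b ≠ a := (lt_of_lt_of_le hbc hca).ne
    show toLex (decide (b = a), b) < toLex (decide (c = a), c)
    simp [Prod.Lex.toLex_lt_toLex, hb, hc, hbc]

theorem topObj_raiseToTop [Fintype O] [Nonempty O] (pi : LinearOrder O) (a : O) :
    topObj (raiseToTop pi a) = a := by
  let _ := raiseToTop pi a
  refine le_antisymm (Finset.max'_le _ _ _ fun b _ => ?_) (le_topObj _ a)
  rcases eq_or_ne b a with rfl | hba
  · exact le_rfl
  · exact (raiseToTop_lt_of_ne hba).le

end RaiseToTop

section Incentives

variable {f : (N → LinearOrder O) → N → O}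

theorem GSP.stratProof (hf : GSP f) : StratProof f := by
  intro p p' i hp hi
  refine hf p p' {i} ⟨i, rfl⟩ hp ⟨?_, i, rfl, hi⟩
  rintro j rfl
  exact Or.inr hi

theorem GSP.nonbossy (hf : GSP f) : Nonbossy f := by
  intro p p' i hp hi
  by_contra hne
  obtain ⟨j, hj⟩ := Function.ne_iff.1 hne
  have hji : j ≠ i := fun e => hj (e ▸ hi)
  -- the coalition `{i, j}` deviates in whichever direction makes `j` better off
  have hpair : ∀ p₀ p₁ : N → LinearOrder O, (∀ k, k ≠ i → p₁ k = p₀ k) → f p₁ i = f p₀ i →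
      ¬ sPref (p₀ j) (f p₁ j) (f p₀ j) := by
    intro p₀ p₁ hp₀ hi₀ hj₀
    refine hf p₀ p₁ {i, j} ⟨i, .inl rfl⟩ (fun k hk => hp₀ k fun e => hk (.inl e))
      ⟨?_, j, .inr rfl, hj₀⟩
    rintro k (rfl | rfl)
    · exact Or.inl hi₀
    · exact Or.inr hj₀
  let _ := p j
  rcases lt_or_gt_of_ne hj with hlt | hgt
  · exact hpair p' p (fun k hk => (hp k hk).symm) hi.symm (by rw [sPref, hp j hji]; exact hlt)
  · exact hpair p p' hp hi hgt

theorem MaskinMono.of_stratProof_of_nonbossy [Fintype N] (hsp : StratProof f)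
    (hnb : Nonbossy f) : MaskinMono f := by
  intro p p' hmono
  suffices h : ∀ S : Finset N, f (fun j => if j ∈ S then p' j else p j) = f p by
    simpa using h Finset.univ
  intro S
  induction S using Finset.induction_on with
  | empty => simp
  | @insert i S hiS ih =>
    set q := fun j => if j ∈ S then p' j else p j
    set q' := fun j => if j ∈ insert i S then p' j else p j
    have hq : ∀ j, j ≠ i → q' j = q j := by
      intro j hj
      simp [q, q', hj]
    have hi : f q' i = f q i := by
      have hsp₀ := hsp q q' i hq
      have hsp₁ := hsp q' q i fun j hj => (hq j hj).symm
      simp only [q, q', if_neg hiS, Finset.mem_insert_self, if_true, ih] at hsp₀ hsp₁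
      rw [ih]
      let _ := p i
      by_contra hne
      exact hsp₁ (hmono i _ (lt_of_le_of_ne (not_lt.1 hsp₀) hne))
    rw [hnb q q' i hq hi, ih]

theorem MaskinMono.exists_tau1_eq [Fintype O] [Nonempty O] (hf : MaskinMono f)
    {p : N → LinearOrder O} {x : N → O} (hx : ∀ i, (p i).le (f p i) (x i)) :
    ∃ q, tau1 q = x ∧ f q = f p :=
  ⟨fun i => raiseToTop (p i) (x i), funext fun _ => topObj_raiseToTop _ _,
    hf _ _ fun i _ hb => raiseToTop_lt_of_lt hb (hx i)⟩

end Incentives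

theorem IsLCA.union {C : Set (N → O)} {α α' : (N → O) → Set N} (h : IsLCA C α)
    (h' : IsLCA C α') : IsLCA C fun x => α x ∪ α' x := fun x =>
  ⟨fun hx => ((h x).1 hx).mono Set.subset_union_left,
    fun hx => show α x ∪ α' x = ∅ by rw [(h x).2 hx, (h' x).2 hx, Set.union_empty]⟩

section LocalPriority

variable [Fintype O] {C : Set (N → O)} {γ : (N → O) → Set N} {p : N → LinearOrder O}
  {x y : N → O} {i : N}

theorem lpStep_of_mem (hi : i ∈ γ x) : lpStep γ p x i = bestLC (p i) (x i) := if_pos hi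

theorem lpStep_of_not_mem (hi : i ∉ γ x) : lpStep γ p x i = x i := if_neg hi

theorem lpStep_lt (hx : lpNoFail γ p x) (hi : i ∈ γ x) : (p i).lt (lpStep γ p x i) (x i) := by
  rw [lpStep_of_mem hi]
  exact bestLC_lt (hx i hi)

theorem lpStep_le (hx : lpNoFail γ p x) (i : N) : (p i).le (lpStep γ p x i) (x i) := by
  let _ := p i
  by_cases hi : i ∈ γ x
  · exact (lpStep_lt hx hi).le
  · rw [lpStep_of_not_mem hi]

theorem sum_card_LCfin_lpStep_lt [Fintype N] (hne : (γ x).Nonempty) (hx : lpNoFail γ p x) :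
    ∑ i, (LCfin (p i) (lpStep γ p x i)).card < ∑ i, (LCfin (p i) (x i)).card := by
  obtain ⟨i, hi⟩ := hne
  refine Finset.sum_lt_sum (fun j _ => Finset.card_le_card (LCfin_subset (lpStep_le hx j)))
    ⟨i, Finset.mem_univ i, Finset.card_lt_card (LCfin_ssubset (lpStep_lt hx hi))⟩

theorem lpRun_antitone {z : ℕ → N → O} {m : ℕ}
    (hz : ∀ t < m, z t ∉ C ∧ lpNoFail γ p (z t) ∧ z (t + 1) = lpStep γ p (z t)) (i : N)
    {s t : ℕ} (hst : s ≤ t) (htm : t ≤ m) : (p i).le (z t i) (z s i) := by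
  let _ := p i
  induction t, hst using Nat.le_induction with
  | base => exact le_rfl
  | succ t _ ih =>
    obtain ⟨-, hnf, hstep⟩ := hz t htm
    rw [hstep]
    exact (lpStep_le hnf i).trans (ih (Nat.le_of_succ_le htm))

variable [Nonempty O]

theorem lpRunsTo.eq_tau1 (h : lpRunsTo C γ p y) (hp : tau1 p ∈ C) : y = tau1 p := by
  obtain ⟨m, z, hz0, hz, rfl, -⟩ := h
  obtain _ | m := m
  · exact hz0
  · exact absurd (hz0 ▸ hp) (hz 0 m.succ_pos).1

theorem lpRunsTo.ne_tau1 (h : lpRunsTo C γ p y) (hp : tau1 p ∉ C) (hi : i ∈ γ (tau1 p)) :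
    y i ≠ tau1 p i := by
  obtain ⟨m, z, hz0, hz, rfl, hy⟩ := h
  obtain _ | m := m
  · exact absurd (hz0 ▸ hy) hp
  · obtain ⟨-, hnf, hstep⟩ := hz 0 m.succ_pos
    rw [← hz0] at hi ⊢
    have hdown : (p i).lt (z 1 i) (z 0 i) := hstep ▸ lpStep_lt hnf hi
    let _ := p i
    exact (lt_of_le_of_lt (lpRun_antitone hz i (Nat.le_add_left 1 m) le_rfl) hdown).ne

def lpSeq (C : Set (N → O)) (γ : (N → O) → Set N) (p : N → LinearOrder O) : ℕ → N → O
  | 0 => tau1 p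
  | t + 1 => if lpSeq C γ p t ∈ C then lpSeq C γ p t else lpStep γ p (lpSeq C γ p t)

theorem lpSeq_succ_of_not_mem {t : ℕ} (h : lpSeq C γ p t ∉ C) :
    lpSeq C γ p (t + 1) = lpStep γ p (lpSeq C γ p t) :=
  if_neg h

theorem le_lpSeq
    (hmove : ∀ x, (∀ i, (p i).le (y i) (x i)) → x ∉ C → ∀ i ∈ γ x, (p i).lt (y i) (x i))
    (t : ℕ) (i : N) : (p i).le (y i) (lpSeq C γ p t i) := by
  induction t generalizing i with
  | zero => exact le_topObj (p i) (y i)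
  | succ t ih =>
    by_cases hC : lpSeq C γ p t ∈ C
    · rw [lpSeq, if_pos hC]
      exact ih i
    · rw [lpSeq_succ_of_not_mem hC]
      by_cases hi : i ∈ γ (lpSeq C γ p t)
      · rw [lpStep_of_mem hi]
        exact le_bestLC (hmove _ ih hC i hi)
      · rw [lpStep_of_not_mem hi]
        exact ih i

theorem exists_lpSeq_mem [Fintype N]
    (hprog : ∀ t, lpSeq C γ p t ∉ C →
      (γ (lpSeq C γ p t)).Nonempty ∧ lpNoFail γ p (lpSeq C γ p t)) :
    ∃ t, lpSeq C γ p t ∈ C := by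
  by_contra! hC
  obtain ⟨t, ht⟩ := WellFounded.not_rel_apply_succ (r := (· < ·))
    fun t => ∑ i, (LCfin (p i) (lpSeq C γ p t i)).card
  rw [lpSeq_succ_of_not_mem (hC t)] at ht
  exact ht (sum_card_LCfin_lpStep_lt (hprog t (hC t)).1 (hprog t (hC t)).2)

theorem lpRunsTo_of_forall_le [Fintype N]
    (hmove : ∀ x, (∀ i, (p i).le (y i) (x i)) → x ∉ C →
      (γ x).Nonempty ∧ ∀ i ∈ γ x, (p i).lt (y i) (x i))
    (hstop : ∀ x, (∀ i, (p i).le (y i) (x i)) → x ∈ C → x = y) :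
    lpRunsTo C γ p y := by
  have hle := le_lpSeq fun x hx hC => (hmove x hx hC).2
  have hnofail : ∀ t, lpSeq C γ p t ∉ C → lpNoFail γ p (lpSeq C γ p t) :=
    fun t hC i hi => ⟨y i, mem_LCfin.2 ((hmove _ (hle t) hC).2 i hi)⟩
  have hterm := exists_lpSeq_mem fun t hC => ⟨(hmove _ (hle t) hC).1, hnofail t hC⟩
  have hmin : ∀ t < Nat.find hterm, lpSeq C γ p t ∉ C := fun t => Nat.find_min hterm
  have hend := hstop _ (hle _) (Nat.find_spec hterm)
  exact ⟨Nat.find hterm, lpSeq C γ p, rfl,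
    fun t ht => ⟨hmin t ht, hnofail t (hmin t ht), lpSeq_succ_of_not_mem (hmin t ht)⟩,
    hend, hend ▸ Nat.find_spec hterm⟩

end LocalPriority

end

theorem lca_closed_under_union_general
    {N O : Type} [Fintype N] [Fintype O] [Nonempty O]
    (C : Set (N → O))
    (f : (N → LinearOrder O) → N → O) (hgsp : GSP f)
    (α α' : (N → O) → Set N)
    (h : lpInduces C α f) (h' : lpInduces C α' f) :
    lpInduces C (fun x => α x ∪ α' x) f := by
  have hmm : MaskinMono f := .of_stratProof_of_nonbossy hgsp.stratProof hgsp.nonbossy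
  refine ⟨h.1.union h'.1, fun p => lpRunsTo_of_forall_le (fun x hx hxC => ?_) fun x hx hxC => ?_⟩
  · obtain ⟨q, rfl, hq⟩ := hmm.exists_tau1_eq hx
    refine ⟨((h.1 _).1 hxC).mono Set.subset_union_left, fun i hi => ?_⟩
    have hne : f q i ≠ tau1 q i := hi.elim ((h.2 q).ne_tau1 hxC) ((h'.2 q).ne_tau1 hxC)
    let _ := p i
    exact lt_of_le_of_ne (hx i) (hq ▸ hne)
  · obtain ⟨q, rfl, hq⟩ := hmm.exists_tau1_eq hx
    rw [← hq, (h.2 q).eq_tau1 hxC]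

/-- Proposition 4: for a group strategy-proof local priority mechanism
`f`, the set of implementable local compromiser assignments inducing `f` is closed under
pointwise unions. -/
theorem lca_closed_under_union
    {N O : Type} [Fintype N] [Fintype O] [Nonempty O]
    (C : Set (N → O)) (hC : C.Nonempty)
    (f : (N → LinearOrder O) → N → O) (hgsp : GSP f)
    (α α' : (N → O) → Set N)
    (h : lpInduces C α f) (h' : lpInduces C α' f) :
    lpInduces C (fun x => α x ∪ α' x) f :=
  lca_closed_under_union_general C f hgsp α α' h h'
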